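/- Let (T_s)_{s∈S} be a bounded representation of a commutative monoid (S,+) on a Banach space E whose semigroup at infinity 𝒯_∞ is non-empty and compact in the operator norm. Then: (1) 𝒯_∞ is a group under operator composition; (2) its neutral element P_∞ is a bounded projection that commutes with every T_s; (3) the restrictions T_s|_{ker P_∞} converge to 0 in the operator norm of L(ker P_∞) along the net s ∈ S; and (4) for every vector x ∈ E the following are equivalent: P_∞ x = 0; the net (T_s x)_{s∈S} converges to 0 in norm; Rx = 0 for every R ∈ 𝒯_∞; Rx = 0 for at least one R ∈ 𝒯_∞. -/
import Mathlib


open Filter Topology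

/-- The pre-order on a commutative monoid `S`: `s ≤ t` iff `t = s + r` for some `r ∈ S`. -/
def sgLE {S : Type*} [AddCommMonoid S] (s t : S) : Prop := ∃ r : S, t = s + r

/-- The filter of "tails" of the directed set `(S, sgLE)`; convergence of the net `(T_s)_{s ∈ S}`
is convergence along this filter. -/
def sgFilter (S : Type*) [AddCommMonoid S] : Filter S :=
  ⨅ s : S, Filter.principal {t | sgLE s t}

/-- The semigroup at infinity with respect to the operator norm:
`𝒯_∞ = ⋂_{r ∈ S} closure {T_s : s ≥ r}`. -/
def sgAtInfty {E : Type*} [NormedAddCommGroup E] [NormedSpace ℝ E]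
    {S : Type*} [AddCommMonoid S] (T : S → E →L[ℝ] E) : Set (E →L[ℝ] E) :=
  ⋂ r : S, closure (T '' {s | sgLE r s})

section Aux

variable {S : Type*} [AddCommMonoid S]

lemma sgLE_refl (s : S) : sgLE s s := ⟨0, (add_zero s).symm⟩

lemma sgLE_zero (s : S) : sgLE 0 s := ⟨s, (zero_add s).symm⟩

lemma sgLE_trans {a b c : S} (h1 : sgLE a b) (h2 : sgLE b c) : sgLE a c := by
  obtain ⟨r, rfl⟩ := h1; obtain ⟨r', rfl⟩ := h2; exact ⟨r + r', add_assoc _ _ _⟩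

lemma tails_mem_sgFilter (r : S) : {t | sgLE r t} ∈ sgFilter S :=
  mem_iInf_of_mem r (mem_principal_self _)

lemma sgFilter_hasBasis :
    (sgFilter S).HasBasis (fun _ : S => True) (fun r => {t | sgLE r t}) := by
  apply hasBasis_iInf_principal
  intro i j
  refine ⟨i + j, fun t ht => sgLE_trans ⟨j, rfl⟩ ht, fun t ht => sgLE_trans ⟨i, add_comm i j⟩ ht⟩

variable {E : Type*} [NormedAddCommGroup E] [NormedSpace ℝ E]
variable {T : S → E →L[ℝ] E}

lemma mem_sgAtInfty {A : E →L[ℝ] E} :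
    A ∈ sgAtInfty T ↔ ∀ r : S, A ∈ closure (T '' {s | sgLE r s}) := Set.mem_iInter

lemma sgAtInfty_approx {A : E →L[ℝ] E} (hA : A ∈ sgAtInfty T) (r : S) {ε : ℝ} (hε : 0 < ε) :
    ∃ s : S, sgLE r s ∧ ‖T s - A‖ < ε := by
  have h := mem_sgAtInfty.mp hA r
  rw [Metric.mem_closure_iff] at h
  obtain ⟨b, hb, hd⟩ := h ε hε
  obtain ⟨s, hs, rfl⟩ := hb
  refine ⟨s, hs, ?_⟩
  rwa [dist_eq_norm, norm_sub_rev] at hd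

lemma sgAtInfty_subset_closure_range : sgAtInfty T ⊆ closure (Set.range T) := fun A hA =>
  closure_mono (Set.image_subset_range _ _) (mem_sgAtInfty.mp hA 0)

lemma sgAtInfty_norm_le {M : ℝ} (hM : ∀ s : S, ‖T s‖ ≤ M) {A : E →L[ℝ] E}
    (hA : A ∈ sgAtInfty T) : ‖A‖ ≤ M := by
  have hcl : IsClosed {X : E →L[ℝ] E | ‖X‖ ≤ M} := isClosed_le continuous_norm continuous_const
  have hsub : Set.range T ⊆ {X : E →L[ℝ] E | ‖X‖ ≤ M} := by rintro _ ⟨s, rfl⟩; exact hM s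
  exact closure_minimal hsub hcl (sgAtInfty_subset_closure_range hA)

lemma sgAtInfty_comm_T (hTmul : ∀ s t : S, T (s + t) = T s * T t) {A : E →L[ℝ] E}
    (hA : A ∈ sgAtInfty T) (t : S) : A * T t = T t * A := by
  have hcl : IsClosed {X : E →L[ℝ] E | X * T t = T t * X} :=
    isClosed_eq (continuous_mul_right _) (continuous_mul_left _)
  have hsub : Set.range T ⊆ {X : E →L[ℝ] E | X * T t = T t * X} := by
    rintro _ ⟨s, rfl⟩
    simp only [Set.mem_setOf_eq, ← hTmul, add_comm]
  exact closure_minimal hsub hcl (sgAtInfty_subset_closure_range hA)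

lemma sgAtInfty_comm (hTmul : ∀ s t : S, T (s + t) = T s * T t) {A B : E →L[ℝ] E}
    (hA : A ∈ sgAtInfty T) (hB : B ∈ sgAtInfty T) : A * B = B * A := by
  have hcl : IsClosed {X : E →L[ℝ] E | A * X = X * A} :=
    isClosed_eq (continuous_mul_left _) (continuous_mul_right _)
  have hsub : Set.range T ⊆ {X : E →L[ℝ] E | A * X = X * A} := by
    rintro _ ⟨s, rfl⟩
    exact sgAtInfty_comm_T hTmul hA s
  exact closure_minimal hsub hcl (sgAtInfty_subset_closure_range hB)

/-- the ideal property : `T w * A ∈ 𝒯_∞` for `A ∈ 𝒯_∞`. -/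
lemma sgAtInfty_T_mul (hTmul : ∀ s t : S, T (s + t) = T s * T t) {A : E →L[ℝ] E}
    (hA : A ∈ sgAtInfty T) (w : S) : T w * A ∈ sgAtInfty T := by
  rw [mem_sgAtInfty]
  intro r
  have hc : Continuous fun X : E →L[ℝ] E => T w * X := continuous_mul_left _
  have h1 : T w * A ∈ (fun X : E →L[ℝ] E => T w * X) '' closure (T '' {s | sgLE r s}) :=
    ⟨A, mem_sgAtInfty.mp hA r, rfl⟩
  have h2 := (image_closure_subset_closure_image hc) h1
  refine closure_mono ?_ h2
  rintro _ ⟨_, ⟨s, hs, rfl⟩, rfl⟩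
  refine ⟨w + s, sgLE_trans hs ⟨w, add_comm w s⟩, ?_⟩
  simp only [hTmul w s]

/-- products of elements of `𝒯_∞` lie in `𝒯_∞`. -/
lemma sgAtInfty_mul_mem (hTmul : ∀ s t : S, T (s + t) = T s * T t) {M : ℝ}
    (hM : ∀ s : S, ‖T s‖ ≤ M) {A B : E →L[ℝ] E}
    (hA : A ∈ sgAtInfty T) (hB : B ∈ sgAtInfty T) : A * B ∈ sgAtInfty T := by
  have hM0 : 0 ≤ M := le_trans (norm_nonneg _) (hM 0)
  rw [mem_sgAtInfty]
  intro r
  rw [Metric.mem_closure_iff]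
  intro ε hε
  have hδ : 0 < ε / (2 * M + 1) := by positivity
  obtain ⟨s, hs, hsA⟩ := sgAtInfty_approx hA r hδ
  obtain ⟨t, _, htB⟩ := sgAtInfty_approx hB 0 hδ
  refine ⟨T (s + t), ⟨s + t, sgLE_trans hs ⟨t, rfl⟩, rfl⟩, ?_⟩
  rw [dist_eq_norm, hTmul]
  have key : A * B - T s * T t = (A - T s) * T t + A * (B - T t) := by noncomm_ring
  have h1 : ‖A * B - T s * T t‖ ≤ ‖A - T s‖ * ‖T t‖ + ‖A‖ * ‖B - T t‖ := by
    rw [key]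
    exact le_trans (norm_add_le _ _) (add_le_add (norm_mul_le _ _) (norm_mul_le _ _))
  have hAn : ‖A‖ ≤ M := sgAtInfty_norm_le hM hA
  refine lt_of_le_of_lt h1 ?_
  have e1 : ‖A - T s‖ * ‖T t‖ ≤ ε / (2 * M + 1) * M := by
    rw [norm_sub_rev]
    exact mul_le_mul hsA.le (hM t) (norm_nonneg _) hδ.le
  have e2 : ‖A‖ * ‖B - T t‖ ≤ M * (ε / (2 * M + 1)) := by
    rw [norm_sub_rev]
    exact mul_le_mul hAn htB.le (norm_nonneg _) hM0
  have heq : ε / (2 * M + 1) * (2 * M + 1) = ε := div_mul_cancel₀ _ (by positivity)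
  nlinarith [hδ, e1, e2]

/-- Key approximation lemma: for `A, B ∈ 𝒯_∞` and any `r`, there is `w ≥ r` with
`A * T w` close to `B`. -/
lemma sgAtInfty_key_approx (hTmul : ∀ s t : S, T (s + t) = T s * T t) {M : ℝ}
    (hM : ∀ s : S, ‖T s‖ ≤ M) {A B : E →L[ℝ] E}
    (hA : A ∈ sgAtInfty T) (hB : B ∈ sgAtInfty T) (r : S) {ε : ℝ} (hε : 0 < ε) :
    ∃ w : S, sgLE r w ∧ ‖B - A * T w‖ ≤ ε := by
  have hM0 : 0 ≤ M := le_trans (norm_nonneg _) (hM 0)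
  have hδ : 0 < ε / (M + 1) := by positivity
  obtain ⟨s, _, hsA⟩ := sgAtInfty_approx hA r hδ
  obtain ⟨t, ht, htB⟩ := sgAtInfty_approx hB (s + r) hδ
  obtain ⟨v, rfl⟩ := ht
  refine ⟨r + v, ⟨v, rfl⟩, ?_⟩
  have h1 : T (s + r + v) = T s * T (r + v) := by rw [← hTmul, add_assoc]
  have h2 : ‖B - A * T (r + v)‖ ≤ ‖B - T (s + r + v)‖ + ‖T (s + r + v) - A * T (r + v)‖ := by
    have := norm_sub_le_norm_sub_add_norm_sub B (T (s + r + v)) (A * T (r + v))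
    exact this
  have h3 : ‖T (s + r + v) - A * T (r + v)‖ ≤ ε / (M + 1) * M := by
    rw [h1, ← sub_mul]
    calc ‖(T s - A) * T (r + v)‖ ≤ ‖T s - A‖ * ‖T (r + v)‖ := norm_mul_le _ _
      _ ≤ ε / (M + 1) * M := mul_le_mul hsA.le (hM _) (norm_nonneg _) hδ.le
  have h4 : ‖B - T (s + r + v)‖ ≤ ε / (M + 1) := by rw [norm_sub_rev]; exact htB.le
  have heq : ε / (M + 1) * (M + 1) = ε := div_mul_cancel₀ _ (by positivity)
  nlinarith [h2, h3, h4]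

/-- Every nonempty compact multiplicatively closed subset of `L(E)` contains an idempotent. -/
lemma exists_idempotent_of_isCompact {K : Set (E →L[ℝ] E)} (hK : IsCompact K)
    (hne : K.Nonempty) (hmul : ∀ a ∈ K, ∀ b ∈ K, a * b ∈ K) :
    ∃ p ∈ K, p * p = p := by
  set 𝒮 : Set (Set (E →L[ℝ] E)) :=
    {C | C.Nonempty ∧ IsCompact C ∧ C ⊆ K ∧ ∀ a ∈ C, ∀ b ∈ C, a * b ∈ C} with h𝒮
  have hK𝒮 : K ∈ 𝒮 := ⟨hne, hK, Set.Subset.rfl, hmul⟩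
  have hchain : ∀ c ⊆ 𝒮, IsChain (· ⊆ ·) c → c.Nonempty →
      ∃ lb ∈ 𝒮, ∀ s ∈ c, lb ⊆ s := by
    intro c hc hch hcne
    haveI : Nonempty c := hcne.to_subtype
    have hdir : Directed (· ⊇ ·) (fun D : c => (D : Set (E →L[ℝ] E))) := by
      intro i j
      rcases hch.total i.2 j.2 with h | h
      · exact ⟨i, Set.Subset.rfl, h⟩
      · exact ⟨j, h, Set.Subset.rfl⟩
    have hnon : (⋂ D : c, (D : Set (E →L[ℝ] E))).Nonempty :=
      IsCompact.nonempty_iInter_of_directed_nonempty_isCompact_isClosed _ hdir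
        (fun D => (hc D.2).1) (fun D => (hc D.2).2.1) (fun D => (hc D.2).2.1.isClosed)
    obtain ⟨D₀, hD₀⟩ := hcne
    refine ⟨⋂ D : c, (D : Set (E →L[ℝ] E)), ⟨hnon, ?_, ?_, ?_⟩, ?_⟩
    · refine IsCompact.of_isClosed_subset (hc hD₀).2.1
        (isClosed_iInter fun D => (hc D.2).2.1.isClosed) ?_
      exact Set.iInter_subset _ (⟨D₀, hD₀⟩ : c)
    · exact (Set.iInter_subset _ (⟨D₀, hD₀⟩ : c)).trans (hc hD₀).2.2.1
    · intro a ha b hb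
      rw [Set.mem_iInter] at *
      exact fun D => (hc D.2).2.2.2 a (ha D) b (hb D)
    · intro s hs
      exact Set.iInter_subset _ (⟨s, hs⟩ : c)
  obtain ⟨C, -, hCmin⟩ := zorn_superset_nonempty 𝒮 hchain K hK𝒮
  obtain ⟨hCne, hCcp, hCK, hCmul⟩ := hCmin.prop
  obtain ⟨a, ha⟩ := hCne
  have hC₂ : (· * a) '' C ∈ 𝒮 := by
    refine ⟨⟨a * a, a, ha, rfl⟩, hCcp.image (continuous_mul_right a), ?_, ?_⟩
    · rintro _ ⟨x, hx, rfl⟩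
      exact hCK (hCmul x hx a ha)
    · rintro _ ⟨x, hx, rfl⟩ _ ⟨y, hy, rfl⟩
      exact ⟨x * a * y, hCmul _ (hCmul x hx a ha) y hy, mul_assoc (x * a) y a⟩
  have hsub : (· * a) '' C ⊆ C := by
    rintro _ ⟨x, hx, rfl⟩
    exact hCmul x hx a ha
  have hC₂eq : C ⊆ (· * a) '' C := hCmin.2 hC₂ hsub
  obtain ⟨b, hb, hba⟩ := hC₂eq ha
  have hD : C ∩ {x | x * a = a} ∈ 𝒮 := by
    refine ⟨⟨b, hb, hba⟩, hCcp.inter_right (isClosed_eq (continuous_mul_right a)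
      continuous_const), fun x hx => hCK hx.1, ?_⟩
    rintro x ⟨hx, hxa⟩ y ⟨hy, hya⟩
    refine ⟨hCmul x hx y hy, ?_⟩
    simp only [Set.mem_setOf_eq] at hxa hya ⊢
    rw [mul_assoc, hya, hxa]
  have hDsub : C ∩ {x | x * a = a} ⊆ C := Set.inter_subset_left
  have : C ⊆ C ∩ {x | x * a = a} := hCmin.2 hD hDsub
  exact ⟨a, hCK ha, (this ha).2⟩

end Aux

/-- If the semigroup at infinity `𝒯_∞` of a bounded representation `(T_s)` of a
commutative monoid on a Banach space is non-empty and operator-norm compact, then: (1) `𝒯_∞` is a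
group under operator multiplication; (2) its neutral element `P_∞` is a projection commuting with
every `T_s`; (3) the restrictions `T_s|_{ker P_∞}` converge to `0` in the operator norm of
`L(ker P_∞)`; (4) for every `x ∈ E` the conditions `P_∞ x = 0`, `T_s x → 0`, `Rx = 0` for all
`R ∈ 𝒯_∞`, and `Rx = 0` for some `R ∈ 𝒯_∞` are all equivalent. -/
theorem statement1 {E : Type*} [NormedAddCommGroup E] [NormedSpace ℝ E] [CompleteSpace E]
    {S : Type*} [AddCommMonoid S] (T : S → E →L[ℝ] E)
    (hT0 : T 0 = 1) (hTmul : ∀ s t : S, T (s + t) = T s * T t)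
    (hbdd : ∃ M : ℝ, ∀ s : S, ‖T s‖ ≤ M)
    (hne : (sgAtInfty T).Nonempty) (hcp : IsCompact (sgAtInfty T)) :
    (∀ A ∈ sgAtInfty T, ∀ B ∈ sgAtInfty T, A * B ∈ sgAtInfty T) ∧
    ∃ P : E →L[ℝ] E,
      P ∈ sgAtInfty T ∧
      P * P = P ∧
      (∀ A ∈ sgAtInfty T, P * A = A ∧ A * P = A) ∧
      (∀ A ∈ sgAtInfty T, ∃ B ∈ sgAtInfty T, A * B = P ∧ B * A = P) ∧
      (∀ s : S, P * T s = T s * P) ∧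
      (∀ ε : ℝ, 0 < ε → ∀ᶠ s in sgFilter S, ∀ x : E, P x = 0 → ‖T s x‖ ≤ ε * ‖x‖) ∧
      (∀ x : E,
        (P x = 0 ↔ Tendsto (fun s => T s x) (sgFilter S) (𝓝 0)) ∧
        (P x = 0 ↔ ∀ R ∈ sgAtInfty T, R x = 0) ∧
        (P x = 0 ↔ ∃ R ∈ sgAtInfty T, R x = 0)) := by
  obtain ⟨M, hM⟩ := hbdd
  have hM0 : 0 ≤ M := le_trans (norm_nonneg _) (hM 0)
  have hprod : ∀ A ∈ sgAtInfty T, ∀ B ∈ sgAtInfty T, A * B ∈ sgAtInfty T :=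
    fun A hA B hB => sgAtInfty_mul_mem hTmul hM hA hB
  obtain ⟨P, hP, hPP⟩ := exists_idempotent_of_isCompact hcp hne hprod
  have hPT : ∀ w : S, P * T w ∈ sgAtInfty T := by
    intro w
    rw [sgAtInfty_comm_T hTmul hP w]
    exact sgAtInfty_T_mul hTmul hP w
  -- divisibility by the idempotent
  have hdiv : ∀ B ∈ sgAtInfty T, ∃ C ∈ sgAtInfty T, P * C = B := by
    intro B hB
    have himg : IsCompact ((P * ·) '' sgAtInfty T) := hcp.image (continuous_mul_left P)
    have hBin : B ∈ (P * ·) '' sgAtInfty T := by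
      rw [← himg.isClosed.closure_eq, Metric.mem_closure_iff]
      intro ε hε
      obtain ⟨w, -, hw⟩ := sgAtInfty_key_approx hTmul hM hP hB 0 (half_pos hε)
      refine ⟨P * (P * T w), ⟨P * T w, hPT w, rfl⟩, ?_⟩
      rw [dist_eq_norm, ← mul_assoc, hPP]
      exact lt_of_le_of_lt hw (half_lt_self hε)
    obtain ⟨C, hC, hPC⟩ := hBin
    exact ⟨C, hC, hPC⟩
  have hident : ∀ B ∈ sgAtInfty T, P * B = B ∧ B * P = B := by
    intro B hB
    obtain ⟨C, hC, rfl⟩ := hdiv B hB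
    constructor
    · rw [← mul_assoc, hPP]
    · rw [sgAtInfty_comm hTmul (hprod P hP C hC) hP, ← mul_assoc, hPP]
  have hinv : ∀ A ∈ sgAtInfty T, ∃ B ∈ sgAtInfty T, A * B = P ∧ B * A = P := by
    intro A hA
    have himg : IsCompact ((A * ·) '' sgAtInfty T) := hcp.image (continuous_mul_left A)
    have hPin : P ∈ (A * ·) '' sgAtInfty T := by
      rw [← himg.isClosed.closure_eq, Metric.mem_closure_iff]
      intro ε hε
      obtain ⟨w, -, hw⟩ := sgAtInfty_key_approx hTmul hM hA hP 0 (half_pos hε)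
      refine ⟨A * (P * T w), ⟨P * T w, hPT w, rfl⟩, ?_⟩
      have hAPT : A * (P * T w) = A * T w := by rw [← mul_assoc, (hident A hA).2]
      rw [dist_eq_norm, hAPT]
      exact lt_of_le_of_lt hw (half_lt_self hε)
    obtain ⟨B, hB, hAB⟩ := hPin
    exact ⟨B, hB, hAB, (sgAtInfty_comm hTmul hB hA).trans hAB⟩
  have hcommT : ∀ s : S, P * T s = T s * P := fun s => sgAtInfty_comm_T hTmul hP s
  -- uniform convergence to zero on the kernel of P
  have heps : ∀ ε : ℝ, 0 < ε → ∀ᶠ s in sgFilter S, ∀ x : E, P x = 0 → ‖T s x‖ ≤ ε * ‖x‖ := by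
    intro ε hε
    have hδ : 0 < ε / (M + 1) := by positivity
    obtain ⟨s₀, -, hs₀⟩ := sgAtInfty_approx hP 0 hδ
    filter_upwards [tails_mem_sgFilter s₀] with t ht
    intro x hx
    obtain ⟨w, rfl⟩ := ht
    have h1 : T (s₀ + w) x = T w ((T s₀ - P) x) := by
      rw [add_comm, hTmul]
      simp [ContinuousLinearMap.mul_apply, ContinuousLinearMap.sub_apply, hx]
    have hd : M * ‖T s₀ - P‖ ≤ ε := by
      have heq : ε / (M + 1) * (M + 1) = ε := div_mul_cancel₀ _ (by positivity)
      nlinarith [hs₀.le, hδ.le, norm_nonneg (T s₀ - P)]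
    rw [h1]
    calc ‖T w ((T s₀ - P) x)‖ ≤ ‖T w‖ * ‖(T s₀ - P) x‖ := (T w).le_opNorm _
      _ ≤ M * (‖T s₀ - P‖ * ‖x‖) :=
          mul_le_mul (hM w) ((T s₀ - P).le_opNorm x) (norm_nonneg _) hM0
      _ ≤ ε * ‖x‖ := by
          rw [← mul_assoc]
          exact mul_le_mul_of_nonneg_right hd (norm_nonneg x)
  -- pointwise statements
  have hker : ∀ x : E, P x = 0 → Tendsto (fun s => T s x) (sgFilter S) (𝓝 0) := by
    intro x hx
    rw [NormedAddCommGroup.tendsto_nhds_zero]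
    intro ε hε
    have hε' : 0 < ε / (2 * (‖x‖ + 1)) := by positivity
    filter_upwards [heps _ hε'] with s hs
    have h := hs x hx
    have hlt : ε / (2 * (‖x‖ + 1)) * ‖x‖ < ε := by
      rw [div_mul_eq_mul_div, div_lt_iff₀ (by positivity)]
      nlinarith [norm_nonneg x]
    exact lt_of_le_of_lt h hlt
  have htend : ∀ x : E, Tendsto (fun s => T s x) (sgFilter S) (𝓝 0) →
      ∀ R ∈ sgAtInfty T, R x = 0 := by
    intro x hx R hR
    have key : ∀ c : ℝ, 0 < c → ‖R x‖ ≤ 0 + c := by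
      intro c hc
      have hε : 0 < c / (‖x‖ + 1) := by positivity
      rw [NormedAddCommGroup.tendsto_nhds_zero] at hx
      obtain ⟨r, -, hr⟩ := sgFilter_hasBasis.mem_iff.mp (hx _ hε)
      obtain ⟨s, hs, hsR⟩ := sgAtInfty_approx hR r hε
      have h0 : ‖T s x‖ < c / (‖x‖ + 1) := hr hs
      have h1 : ‖R x‖ ≤ ‖R x - T s x‖ + ‖T s x‖ := by
        calc ‖R x‖ = ‖R x - T s x + T s x‖ := by rw [sub_add_cancel]
          _ ≤ ‖R x - T s x‖ + ‖T s x‖ := norm_add_le _ _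
      have h2 : ‖R x - T s x‖ ≤ ‖R - T s‖ * ‖x‖ := by
        have := (R - T s).le_opNorm x
        simpa using this
      have h3 : ‖R - T s‖ * ‖x‖ ≤ c / (‖x‖ + 1) * ‖x‖ := by
        rw [norm_sub_rev]
        exact mul_le_mul_of_nonneg_right hsR.le (norm_nonneg x)
      have heq : c / (‖x‖ + 1) * (‖x‖ + 1) = c := div_mul_cancel₀ _ (by positivity)
      nlinarith [h0, h1, h2, h3]
    have : ‖R x‖ ≤ 0 := le_of_forall_pos_le_add key
    exact norm_le_zero_iff.mp this
  refine ⟨hprod, P, hP, hPP, hident, hinv, hcommT, heps, ?_⟩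
  intro x
  have e1 : P x = 0 → Tendsto (fun s => T s x) (sgFilter S) (𝓝 0) := hker x
  have e2 : Tendsto (fun s => T s x) (sgFilter S) (𝓝 0) → ∀ R ∈ sgAtInfty T, R x = 0 := htend x
  have e3 : (∀ R ∈ sgAtInfty T, R x = 0) → ∃ R ∈ sgAtInfty T, R x = 0 := fun h => ⟨P, hP, h P hP⟩
  have e4 : (∃ R ∈ sgAtInfty T, R x = 0) → P x = 0 := by
    rintro ⟨R, hR, hRx⟩
    obtain ⟨B, hB, -, hBR⟩ := hinv R hR
    have hPx : P x = B (R x) := by rw [← hBR]; rfl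
    rw [hPx, hRx, map_zero]
  exact ⟨⟨fun h => e1 h, fun h => e4 (e3 (e2 h))⟩, ⟨fun h => e2 (e1 h), fun h => e4 (e3 h)⟩,
    ⟨fun h => e3 (e2 (e1 h)), e4⟩⟩
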